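/- arXiv:2407.08079 — 3 statements merged into one kernel-verified Lean document; each statement's English description precedes it below -/
import Mathlib

section
/- Let B be a C¹ vector field on ℝ^n whose flow X has a periodic orbit of period T through x_fix. Define D X_T(t) := D X(X(x_fix, t), T), the full-period Jacobian based at the point X(x_fix, t) on the cycle. Then D X_T satisfies the commutator evolution equation d/dt D X_T(t) = [∇B(X(x_fix,t)), D X_T(t)] = ∇B · D X_T - D X_T · ∇B. -/
open MeasureTheory intervalIntegral

set_option maxHeartbeats 1600000

/-- the full-period Jacobian along a cycle satisfies the commutator
evolution equation `d/dt DX_T = [∇B, DX_T]`. -/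
theorem full_period_jacobian_commutator_evolution {n : ℕ}
    (B : (Fin n → ℝ) → (Fin n → ℝ)) (X : (Fin n → ℝ) → ℝ → (Fin n → ℝ))
    (hB : ContDiff ℝ 1 B)
    (hflow : ∀ x t, HasDerivAt (X x) (B (X x t)) t)
    (hinit : ∀ x, X x 0 = x)
    (hgroup : ∀ (y : Fin n → ℝ) (s t : ℝ), X (X y t) s = X y (t + s))
    (hsmooth : ContDiff ℝ 1 (fun p : (Fin n → ℝ) × ℝ => X p.1 p.2))
    (x_fix : Fin n → ℝ) (T : ℝ) (hper : X x_fix T = x_fix) :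
    ∀ t : ℝ, HasDerivAt (fun s => fderiv ℝ (fun y => X y T) (X x_fix s))
      ((fderiv ℝ B (X x_fix t)).comp (fderiv ℝ (fun y => X y T) (X x_fix t))
        - (fderiv ℝ (fun y => X y T) (X x_fix t)).comp (fderiv ℝ B (X x_fix t))) t := by
  intro t
  set P : (Fin n → ℝ) × ℝ → (Fin n → ℝ) := fun p => X p.1 p.2 with hPdef
  set D : (Fin n → ℝ) → ℝ → ((Fin n → ℝ) →L[ℝ] (Fin n → ℝ)) :=
    fun z s => fderiv ℝ (fun y => X y s) z with hDdef
  have hXc : Continuous fun p : (Fin n → ℝ) × ℝ => X p.1 p.2 := hsmooth.continuous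
  have hXc1 : ∀ z : Fin n → ℝ, Continuous (X z) := fun z =>
    hXc.comp (continuous_const.prodMk continuous_id)
  -- differentiability of the partial map
  have hpart : ∀ (z : Fin n → ℝ) (s : ℝ), HasFDerivAt (fun y => X y s)
      ((fderiv ℝ P (z, s)).comp (ContinuousLinearMap.inl ℝ (Fin n → ℝ) ℝ)) z := by
    intro z s
    exact ((hsmooth.differentiable one_ne_zero (z, s)).hasFDerivAt).comp z
      (hasFDerivAt_prodMk_left (𝕜 := ℝ) z s)
  have hD : ∀ (z : Fin n → ℝ) (s : ℝ), HasFDerivAt (fun y => X y s) (D z s) z := fun z s =>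
    (hpart z s).differentiableAt.hasFDerivAt
  have hDeq : ∀ (z : Fin n → ℝ) (s : ℝ),
      D z s = (fderiv ℝ P (z, s)).comp (ContinuousLinearMap.inl ℝ (Fin n → ℝ) ℝ) := fun z s =>
    (hpart z s).fderiv
  have hDcont : Continuous fun p : (Fin n → ℝ) × ℝ => D p.1 p.2 := by
    have h1 : Continuous fun p : (Fin n → ℝ) × ℝ => fderiv ℝ P p :=
      hsmooth.continuous_fderiv one_ne_zero
    have h2 : Continuous fun p : (Fin n → ℝ) × ℝ =>
        (fderiv ℝ P p).comp (ContinuousLinearMap.inl ℝ (Fin n → ℝ) ℝ) :=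
      h1.clm_comp continuous_const
    convert h2 using 2 with p
    exact hDeq p.1 p.2
  -- cocycle identity
  have hco : ∀ (z : Fin n → ℝ) (u s : ℝ), D z (u + s) = (D (X z u) s).comp (D z u) := by
    intro z u s
    have hfun : (fun y => X y (u + s)) = (fun w => X w s) ∘ fun y => X y u :=
      funext fun y => (hgroup y s u).symm
    have h := ((hD (X z u) s).comp z (hD z u)).fderiv
    rw [← hfun] at h
    exact h
  have hD0 : ∀ z : Fin n → ℝ, D z 0 = 1 := by
    intro z
    have h : (fun y : Fin n → ℝ => X y 0) = fun y => y := funext hinit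
    simp only [hDdef, h, fderiv_id']
    rfl
  -- units
  have hinvl : ∀ (z : Fin n → ℝ) (u : ℝ), (D (X z u) (-u)).comp (D z u) = 1 := by
    intro z u
    have h := hco z u (-u)
    rw [add_neg_cancel, hD0] at h
    exact h.symm
  have hinvr : ∀ (z : Fin n → ℝ) (u : ℝ), (D z u).comp (D (X z u) (-u)) = 1 := by
    intro z u
    have h := hinvl (X z u) (-u)
    rwa [neg_neg, hgroup z (-u) u, add_neg_cancel, hinit] at h
  set U : ℝ → ((Fin n → ℝ) →L[ℝ] (Fin n → ℝ))ˣ := fun s =>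
    ⟨D x_fix s, D (X x_fix s) (-s),
      by rw [ContinuousLinearMap.mul_def]; exact hinvr x_fix s,
      by rw [ContinuousLinearMap.mul_def]; exact hinvl x_fix s⟩ with hU
  set A : ℝ → ((Fin n → ℝ) →L[ℝ] (Fin n → ℝ)) := fun s => D x_fix s with hA
  -- step A : integral equation for the flow
  have hflowint : ∀ (y : Fin n → ℝ) (u : ℝ), X y u = y + ∫ s in (0:ℝ)..u, B (X y s) := by
    intro y u
    have hcont : Continuous fun s => B (X y s) := hB.continuous.comp (hXc1 y)
    have h := integral_eq_sub_of_hasDerivAt (fun s _ => hflow y s)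
      (hcont.intervalIntegrable 0 u)
    rw [h, hinit]
    abel
  -- step B : integral (variational) equation for A
  have hvar : ∀ u : ℝ, A u = 1 + ∫ s in (0:ℝ)..u, (fderiv ℝ B (X x_fix s)).comp (A s) := by
    intro u
    set F' : (Fin n → ℝ) → ℝ → ((Fin n → ℝ) →L[ℝ] (Fin n → ℝ)) :=
      fun y s => (fderiv ℝ B (X y s)).comp (D y s) with hF'
    have hF'cont : Continuous fun p : (Fin n → ℝ) × ℝ => F' p.1 p.2 := by
      have h1 : Continuous fun p : (Fin n → ℝ) × ℝ => fderiv ℝ B (X p.1 p.2) :=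
        (hB.continuous_fderiv one_ne_zero).comp hXc
      exact h1.clm_comp hDcont
    obtain ⟨C, hC⟩ : ∃ C, ∀ p ∈ (Metric.closedBall x_fix 1) ×ˢ Set.uIcc (0:ℝ) u,
        ‖F' p.1 p.2‖ ≤ C := by
      have hcomp : IsCompact ((Metric.closedBall x_fix 1) ×ˢ Set.uIcc (0:ℝ) u) :=
        (isCompact_closedBall _ _).prod isCompact_uIcc
      exact hcomp.exists_bound_of_continuousOn hF'cont.continuousOn
    have key : HasFDerivAt (fun y => ∫ s in (0:ℝ)..u, B (X y s))
        (∫ s in (0:ℝ)..u, F' x_fix s) x_fix := by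
      apply hasFDerivAt_integral_of_dominated_of_fderiv_le'' (s := Metric.ball x_fix 1) (bound := fun _ => C)
        (Metric.ball_mem_nhds x_fix one_pos)
      · exact Filter.Eventually.of_forall fun y =>
          ((hB.continuous.comp (hXc1 y)).aestronglyMeasurable).restrict
      · exact (hB.continuous.comp (hXc1 x_fix)).intervalIntegrable 0 u
      · exact ((hF'cont.comp
          (continuous_const.prodMk continuous_id)).aestronglyMeasurable).restrict
      · refine ae_restrict_of_forall_mem measurableSet_uIoc fun s hs y hy => ?_
        exact hC (y, s) ⟨Metric.ball_subset_closedBall hy, Set.uIoc_subset_uIcc hs⟩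
      · exact intervalIntegrable_const
      · refine ae_restrict_of_forall_mem measurableSet_uIoc fun s _ y _ => ?_
        exact ((hB.differentiable one_ne_zero (X y s)).hasFDerivAt).comp y (hD y s)
    have hXu : (fun y => X y u) = fun y => y + ∫ s in (0:ℝ)..u, B (X y s) :=
      funext fun y => hflowint y u
    have hAder : HasFDerivAt (fun y => X y u)
        (1 + ∫ s in (0:ℝ)..u, F' x_fix s) x_fix := by
      rw [hXu]
      exact (hasFDerivAt_id x_fix).add key
    exact hAder.fderiv
  -- step C : the derivative of A
  set g : ℝ → ((Fin n → ℝ) →L[ℝ] (Fin n → ℝ)) :=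
    fun s => (fderiv ℝ B (X x_fix s)).comp (A s) with hg
  have hgcont : Continuous g := by
    have h1 : Continuous fun s => fderiv ℝ B (X x_fix s) :=
      (hB.continuous_fderiv one_ne_zero).comp (hXc1 x_fix)
    have h2 : Continuous A := hDcont.comp (continuous_const.prodMk continuous_id)
    exact h1.clm_comp h2
  have hA' : HasDerivAt A (g t) t := by
    have h1 : HasDerivAt (fun u => (1 : (Fin n → ℝ) →L[ℝ] (Fin n → ℝ))
        + ∫ s in (0:ℝ)..u, g s) (g t) t := by
      have h := integral_hasDerivAt_right (hgcont.intervalIntegrable 0 t)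
        hgcont.stronglyMeasurable.stronglyMeasurableAtFilter
        hgcont.continuousAt
      simpa using h.const_add (1 : (Fin n → ℝ) →L[ℝ] (Fin n → ℝ))
    have hAe : A = fun u => (1 : (Fin n → ℝ) →L[ℝ] (Fin n → ℝ))
        + ∫ s in (0:ℝ)..u, g s := funext hvar
    rw [hAe]
    exact h1
  -- derivative of the inverse
  have hUcoe : ∀ s, (↑(U s) : (Fin n → ℝ) →L[ℝ] (Fin n → ℝ)) = A s := fun s => rfl
  have hAinv' : HasDerivAt (fun s => Ring.inverse (A s))
      (-(↑(U t)⁻¹ * g t * ↑(U t)⁻¹)) t := by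
    have h := (hasFDerivAt_ringInverse (𝕜 := ℝ) (U t)).comp_hasDerivAt t hA'
    simp at h; exact h
  -- identify M with the conjugation formula
  have hMeq : ∀ s : ℝ, D (X x_fix s) T = A s * D x_fix T * Ring.inverse (A s) := by
    intro s
    have h1 : D x_fix (T + s) = (D (X x_fix s) T).comp (A s) := by
      rw [add_comm]; exact hco x_fix s T
    have h2 : D x_fix (T + s) = (D x_fix s).comp (D x_fix T) := by
      have h := hco x_fix T s
      rwa [hper] at h
    have h3 : (D (X x_fix s) T) * (A s) = (A s) * (D x_fix T) := by
      rw [ContinuousLinearMap.mul_def, ContinuousLinearMap.mul_def, ← h1, h2]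
    have h4 : D (X x_fix s) T = A s * D x_fix T * ↑(U s)⁻¹ := by
      rw [Units.eq_mul_inv_iff_mul_eq]
      exact h3
    rw [h4, Ring.inverse_unit (U s)]
  -- assemble
  have hfinal : HasDerivAt (fun s => A s * D x_fix T * Ring.inverse (A s))
      (g t * D x_fix T * Ring.inverse (A t)
        + A t * D x_fix T * -(↑(U t)⁻¹ * g t * ↑(U t)⁻¹)) t :=
    (hA'.mul_const (D x_fix T)).mul hAinv'
  have hM : (fun s => fderiv ℝ (fun y => X y T) (X x_fix s))
      = fun s => A s * D x_fix T * Ring.inverse (A s) := funext fun s => hMeq s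
  rw [hM]
  convert hfinal using 1
  rw [Ring.inverse_unit (U t)]
  have hab : A t * ↑(U t)⁻¹ = 1 := by rw [← hUcoe]; exact (U t).mul_inv
  have hMt : fderiv ℝ (fun y => X y T) (X x_fix t)
      = A t * D x_fix T * ↑(U t)⁻¹ := by
    have := hMeq t
    rwa [Ring.inverse_unit (U t)] at this
  have hgt : g t = fderiv ℝ B (X x_fix t) * A t := rfl
  rw [hMt, hgt]
  simp only [← ContinuousLinearMap.mul_def]
  set c := fderiv ℝ B (X x_fix t)
  set a := A t
  set m := D x_fix T
  set b := (↑(U t)⁻¹ : (Fin n → ℝ) →L[ℝ] (Fin n → ℝ))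
  have e1 : c * a * m * b = c * (a * m * b) := by noncomm_ring
  have e2 : a * m * (b * (c * a) * b) = a * m * b * c * (a * b) := by noncomm_ring
  have e3 : a * m * -(b * (c * a) * b) = -(a * m * (b * (c * a) * b)) := by
    ext y; simp [ContinuousLinearMap.mul_apply]
  rw [e3, e2, hab, mul_one, sub_eq_add_neg, e1]
end

section
/- Let A ∈ ℝ^{n×n} be diagonalizable, and let b̂ ∈ ℝ^n be a unit eigenvector of A with eigenvalue 1, where the eigenvalue 1 has algebraic multiplicity one, so that all other eigenvalues λ_i of A satisfy λ_i ≠ 1. Then the linear map v ↦ v - (I - b̂ b̂ᵀ) A v, restricted to {v : v ⊥ b̂}, is a bijection onto {v : v ⊥ b̂}; equivalently, (I - b̂ b̂ᵀ) A v = v has no nonzero solution v ⊥ b̂. -/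
set_option maxHeartbeats 1000000


/-- if `A` is diagonalizable with eigenvalue 1 simple with unit
eigenvector `b̂` (so all other eigenvalues differ from 1), then
`v ↦ v - (I - b̂b̂ᵀ) A v` is a bijection of `b̂ ⊥` onto itself. -/
theorem projected_map_bijective_on_perp {n : ℕ}
    (A : EuclideanSpace ℝ (Fin n) →ₗ[ℝ] EuclideanSpace ℝ (Fin n))
    (b : EuclideanSpace ℝ (Fin n)) (hb : ‖b‖ = 1) (hAb : A b = b)
    (hdiag : (⨆ μ : ℝ, Module.End.eigenspace A μ) = ⊤)
    (hsimple : Module.End.eigenspace A 1 = Submodule.span ℝ {b}) :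
    Set.BijOn (fun v => v - (A v - (inner ℝ b (A v) : ℝ) • b))
      {v : EuclideanSpace ℝ (Fin n) | (inner ℝ b v : ℝ) = 0}
      {v : EuclideanSpace ℝ (Fin n) | (inner ℝ b v : ℝ) = 0} := by
  classical
  set W : Submodule ℝ (EuclideanSpace ℝ (Fin n)) := ⨆ (μ : ℝ) (_ : μ ≠ 1), Module.End.eigenspace A μ with hW
  have hdisj : Disjoint (Submodule.span ℝ {b}) W := by
    have h := iSupIndep_def.mp (Module.End.eigenspaces_iSupIndep A) 1
    rwa [hsimple] at h
  have hsup : Submodule.span ℝ {b} ⊔ W = ⊤ := by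
    rw [← top_le_iff, ← hdiag]
    refine iSup_le fun μ => ?_
    by_cases hμ : μ = 1
    · subst hμ; rw [hsimple]; exact le_sup_left
    · exact le_trans (le_iSup₂ (f := fun μ _ => Module.End.eigenspace A μ) μ hμ) le_sup_right
  have hinvμ : ∀ (μ : ℝ) x, x ∈ Module.End.eigenspace A μ → A x ∈ Module.End.eigenspace A μ := by
    intro μ x hx
    rw [Module.End.mem_eigenspace_iff] at hx ⊢
    rw [hx, map_smul, hx]
  have hWinv : ∀ w ∈ W, A w ∈ W := by
    have : W.map A ≤ W := by
      rw [hW, Submodule.map_iSup]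
      refine iSup_le fun μ => ?_
      rw [Submodule.map_iSup]
      refine iSup_le fun hμ => ?_
      refine le_trans ?_ (le_iSup₂ (f := fun μ _ => Module.End.eigenspace A μ) μ hμ)
      rw [Submodule.map_le_iff_le_comap]
      exact fun x hx => hinvμ μ x hx
    exact fun w hw => this ⟨w, hw, rfl⟩
  have hbb : (inner ℝ b b : ℝ) = 1 := by
    rw [real_inner_self_eq_norm_sq, hb]; norm_num
  -- key injectivity
  have hinj : ∀ v : EuclideanSpace ℝ (Fin n), (inner ℝ b v : ℝ) = 0 →
      v - (A v - (inner ℝ b (A v) : ℝ) • b) = 0 → v = 0 := by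
    intro v hv0 heq
    have hAv : A v = v + (inner ℝ b (A v) : ℝ) • b := by
      have h := sub_eq_zero.mp heq
      exact sub_eq_iff_eq_add.mp h.symm
    obtain ⟨p, hp, q, hq, hpq⟩ := Submodule.mem_sup.mp (hsup ▸ Submodule.mem_top (x := v))
    obtain ⟨α, rfl⟩ := Submodule.mem_span_singleton.mp hp
    set c : ℝ := (inner ℝ b (A v) : ℝ)
    have hkey : A q - q = c • b := by
      have h1 : A v = α • b + A q := by rw [← hpq, map_add, map_smul, hAb]
      have h2 : A v = α • b + q + c • b := by rw [hAv, ← hpq]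
      have := h1.symm.trans h2
      rw [eq_comm, ← sub_eq_zero] at this ⊢
      rw [← this]; abel
    have hcb : c • b = 0 := by
      refine Submodule.disjoint_def.mp hdisj _ ?_ ?_
      · exact Submodule.smul_mem _ c (Submodule.mem_span_singleton_self b)
      · rw [← hkey]; exact Submodule.sub_mem _ (hWinv q hq) hq
    have hq1 : q ∈ Submodule.span ℝ {b} := by
      rw [← hsimple, Module.End.mem_eigenspace_iff, one_smul]
      have := hkey; rw [hcb, sub_eq_zero] at this; exact this
    have hq0 : q = 0 := Submodule.disjoint_def.mp hdisj q hq1 hq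
    have hα : α = 0 := by
      have : (inner ℝ b v : ℝ) = α := by
        rw [← hpq, hq0, add_zero, inner_smul_right, hbb, mul_one]
      rw [hv0] at this; exact this.symm
    rw [← hpq, hα, hq0, zero_smul, zero_add]
  -- the linear map
  set T : EuclideanSpace ℝ (Fin n) →ₗ[ℝ] EuclideanSpace ℝ (Fin n) :=
    LinearMap.id - A + LinearMap.smulRight (((innerSL ℝ b).toLinearMap).comp A) b with hTdef
  have hT : ∀ v : EuclideanSpace ℝ (Fin n), T v = v - (A v - (inner ℝ b (A v) : ℝ) • b) := by
    intro v
    simp only [hTdef, LinearMap.add_apply, LinearMap.sub_apply, LinearMap.id_apply,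
      LinearMap.smulRight_apply, LinearMap.comp_apply, ContinuousLinearMap.coe_coe,
      innerSL_apply_apply]
    abel
  set Kp : Submodule ℝ (EuclideanSpace ℝ (Fin n)) := LinearMap.ker ((innerSL ℝ b).toLinearMap) with hKp
  have hmemKp : ∀ v : EuclideanSpace ℝ (Fin n), v ∈ Kp ↔ (inner ℝ b v : ℝ) = 0 := by
    intro v; simp [hKp, LinearMap.mem_ker]
  have hmaps : ∀ v ∈ Kp, T v ∈ Kp := by
    intro v hv
    rw [hmemKp] at hv ⊢
    rw [hT, inner_sub_right, inner_sub_right, inner_smul_right, hbb, mul_one, hv]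
    ring
  set S : Kp →ₗ[ℝ] Kp := T.restrict hmaps with hS
  have hSinj : Function.Injective S := by
    rw [← LinearMap.ker_eq_bot]
    rw [Submodule.eq_bot_iff]
    rintro ⟨x, hx⟩ hker
    rw [LinearMap.mem_ker, hS, Subtype.ext_iff, LinearMap.restrict_apply] at hker
    exact Subtype.ext (hinj x ((hmemKp x).mp hx) (by rw [← hT]; exact hker))
  have hSsurj : Function.Surjective S := LinearMap.injective_iff_surjective.mp hSinj
  refine ⟨fun v hv => ?_, fun x hx y hy h => ?_, fun u hu => ?_⟩
  · have h := hmaps v ((hmemKp v).mpr hv)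
    rw [hT v] at h
    exact (hmemKp _).mp h
  · have hx' : (inner ℝ b x : ℝ) = 0 := hx
    have hy' : (inner ℝ b y : ℝ) = 0 := hy
    have hsub : x - y = 0 := by
      refine hinj (x - y) (by rw [inner_sub_right, hx', hy', sub_zero]) ?_
      have : T x = T y := by rw [hT, hT]; exact h
      have h0 : T (x - y) = 0 := by rw [map_sub, this, sub_self]
      rw [hT] at h0; exact h0
    exact sub_eq_zero.mp hsub
  · obtain ⟨x, hxeq⟩ := hSsurj ⟨u, (hmemKp u).mpr hu⟩
    refine ⟨x, (hmemKp x).mp x.2, ?_⟩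
    rw [hS, Subtype.ext_iff, LinearMap.restrict_apply] at hxeq
    simp only [← hT]
    exact hxeq
end

section
/- Along a T-periodic orbit of the flow of B perturbed to B + ε ΔB, the full-period trajectory mismatch δX_T(t) := δX(X(x_fix,t), T) (first variation of the time-T map evaluated along the cycle) satisfies the linear inhomogeneous ODE d/dt δX_T = ∇B · δX_T - (D X_T - I) · ΔB, where all quantities are evaluated at the point X(x_fix, t). -/
open Set Metric intervalIntegral MeasureTheory

/-- Uniqueness for globally-defined linear inhomogeneous ODEs with continuous
time-dependent coefficients. -/
lemma linear_ODE_unique {E : Type*} [NormedAddCommGroup E] [NormedSpace ℝ E]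
    {A : ℝ → E →L[ℝ] E} {c : ℝ → E} (hA : Continuous A) {f g : ℝ → E}
    (hf : ∀ τ, HasDerivAt f (A τ (f τ) + c τ) τ)
    (hg : ∀ τ, HasDerivAt g (A τ (g τ) + c τ) τ)
    (h0 : f 0 = g 0) (τ : ℝ) : f τ = g τ := by
  set a : ℝ := min 0 τ - 1 with ha
  set b : ℝ := max 0 τ + 1 with hb
  have hab : a ≤ b := by
    have h1 : min 0 τ ≤ max 0 τ := le_trans (min_le_left _ _) (le_max_left _ _)
    linarith
  obtain ⟨C, hC⟩ := (isCompact_Icc (a := a) (b := b)).exists_bound_of_continuousOn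
    (hA.continuousOn)
  set K : NNReal := ⟨max C 0, le_max_right _ _⟩ with hK
  set v : ℝ → E → E := fun t x => A (projIcc a b hab t) x + c (projIcc a b hab t) with hv
  have hlip : ∀ t, LipschitzWith K (v t) := by
    intro t
    have h1 : LipschitzWith K (fun x => A (projIcc a b hab t) x) := by
      apply (A (projIcc a b hab t)).lipschitz.weaken
      rw [← NNReal.coe_le_coe]
      exact le_trans (hC _ (projIcc a b hab t).2) (le_max_left _ _)
    have h2 := ((isometry_add_right (c (projIcc a b hab t))).lipschitz.comp h1)
    simpa [Function.comp_def, hv] using h2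
  have hproj : ∀ t ∈ Ioo a b, v t = fun x => A t x + c t := by
    intro t ht
    have : projIcc a b hab t = ⟨t, ⟨le_of_lt ht.1, le_of_lt ht.2⟩⟩ :=
      projIcc_of_mem hab ⟨le_of_lt ht.1, le_of_lt ht.2⟩
    simp [hv, this]
  have h0mem : (0 : ℝ) ∈ Ioo a b := by
    constructor
    · have := min_le_left 0 τ; simp only [ha]; linarith
    · have := le_max_left 0 τ; simp only [hb]; linarith
  have key := ODE_solution_unique_of_mem_Icc (s := fun _ => (univ : Set E))
    (fun t _ => (hlip t).lipschitzOnWith) h0mem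
    (fun x _ => (hf x).continuousAt.continuousWithinAt)
    (fun t ht => by rw [hproj t ht]; exact hf t)
    (fun _ _ => mem_univ _)
    (fun x _ => (hg x).continuousAt.continuousWithinAt)
    (fun t ht => by rw [hproj t ht]; exact hg t)
    (fun _ _ => mem_univ _) h0
  refine key ⟨?_, ?_⟩
  · have := min_le_right 0 τ; simp only [ha]; linarith
  · have := le_max_right 0 τ; simp only [hb]; linarith

open Set Metric intervalIntegral MeasureTheory ContinuousLinearMap

variable {n : ℕ}

/-- The first variation in `ε` of the perturbed flow. -/
noncomputable def uvar (X : ℝ → (Fin n → ℝ) → ℝ → (Fin n → ℝ))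
    (y : Fin n → ℝ) (τ : ℝ) : Fin n → ℝ :=
  deriv (fun ε => X ε y τ) 0

/-- The spatial Jacobian of the unperturbed flow. -/
noncomputable def flowD (X : ℝ → (Fin n → ℝ) → ℝ → (Fin n → ℝ))
    (y : Fin n → ℝ) (τ : ℝ) : (Fin n → ℝ) →L[ℝ] (Fin n → ℝ) :=
  fderiv ℝ (fun z => X 0 z τ) y

section plumbing

variable {X : ℝ → (Fin n → ℝ) → ℝ → (Fin n → ℝ)}
  (hsmooth : ContDiff ℝ 1 (fun p : ℝ × (Fin n → ℝ) × ℝ => X p.1 p.2.1 p.2.2))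

include hsmooth

lemma pd_eps (ε : ℝ) (y : Fin n → ℝ) (τ : ℝ) :
    HasDerivAt (fun e => X e y τ)
      (fderiv ℝ (fun p : ℝ × (Fin n → ℝ) × ℝ => X p.1 p.2.1 p.2.2) (ε, y, τ)
        (1, 0, 0)) ε := by
  have hΦ := (hsmooth.differentiable one_ne_zero (ε, y, τ)).hasFDerivAt
  have hinner : HasDerivAt (fun e : ℝ => ((e, y, τ) : ℝ × (Fin n → ℝ) × ℝ))
      ((1 : ℝ), (0 : Fin n → ℝ), (0 : ℝ)) ε :=
    (hasDerivAt_id ε).prodMk ((hasDerivAt_const _ _).prodMk (hasDerivAt_const _ _))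
  exact hΦ.comp_hasDerivAt ε hinner

lemma pd_eps' (ε : ℝ) (y : Fin n → ℝ) (τ : ℝ) :
    HasDerivAt (fun e => X e y τ) (deriv (fun e => X e y τ) ε) ε := by
  have h := pd_eps hsmooth ε y τ
  rw [← h.deriv] at h
  exact h

lemma uvar_eq (y : Fin n → ℝ) (τ : ℝ) :
    uvar X y τ = fderiv ℝ (fun p : ℝ × (Fin n → ℝ) × ℝ => X p.1 p.2.1 p.2.2)
      (0, y, τ) (1, 0, 0) :=
  (pd_eps hsmooth 0 y τ).deriv

lemma pd_y (y : Fin n → ℝ) (τ : ℝ) :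
    HasFDerivAt (fun z => X 0 z τ) (flowD X y τ) y := by
  have hΦ := (hsmooth.differentiable one_ne_zero ((0 : ℝ), y, τ)).hasFDerivAt
  set J : (Fin n → ℝ) →L[ℝ] ℝ × (Fin n → ℝ) × ℝ :=
    (0 : (Fin n → ℝ) →L[ℝ] ℝ).prod
      ((ContinuousLinearMap.id ℝ (Fin n → ℝ)).prod (0 : (Fin n → ℝ) →L[ℝ] ℝ)) with hJ
  have hinner : HasFDerivAt (fun z : Fin n → ℝ => (((0 : ℝ), z, τ) : ℝ × (Fin n → ℝ) × ℝ)) J y :=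
    (hasFDerivAt_const _ _).prodMk ((hasFDerivAt_id _).prodMk (hasFDerivAt_const _ _))
  have h := hΦ.comp y hinner
  have : flowD X y τ =
      (fderiv ℝ (fun p : ℝ × (Fin n → ℝ) × ℝ => X p.1 p.2.1 p.2.2) (0, y, τ)).comp J :=
    h.fderiv
  rw [this]; exact h

lemma flowD_eq (y : Fin n → ℝ) (τ : ℝ) :
    flowD X y τ = (fderiv ℝ (fun p : ℝ × (Fin n → ℝ) × ℝ => X p.1 p.2.1 p.2.2)
      (0, y, τ)).comp
      ((0 : (Fin n → ℝ) →L[ℝ] ℝ).prod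
        ((ContinuousLinearMap.id ℝ (Fin n → ℝ)).prod (0 : (Fin n → ℝ) →L[ℝ] ℝ))) := by
  have hΦ := (hsmooth.differentiable one_ne_zero ((0 : ℝ), y, τ)).hasFDerivAt
  have hinner : HasFDerivAt (fun z : Fin n → ℝ => (((0 : ℝ), z, τ) : ℝ × (Fin n → ℝ) × ℝ))
      ((0 : (Fin n → ℝ) →L[ℝ] ℝ).prod
        ((ContinuousLinearMap.id ℝ (Fin n → ℝ)).prod (0 : (Fin n → ℝ) →L[ℝ] ℝ))) y :=
    (hasFDerivAt_const _ _).prodMk ((hasFDerivAt_id _).prodMk (hasFDerivAt_const _ _))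
  exact (hΦ.comp y hinner).fderiv

lemma cont_X : Continuous (fun p : (Fin n → ℝ) × ℝ => X 0 p.1 p.2) := by
  have := hsmooth.continuous
  exact this.comp (by fun_prop : Continuous fun p : (Fin n → ℝ) × ℝ =>
    (((0 : ℝ), p.1, p.2) : ℝ × (Fin n → ℝ) × ℝ))

lemma cont_u : Continuous (fun p : (Fin n → ℝ) × ℝ => uvar X p.1 p.2) := by
  have h1 : (fun p : (Fin n → ℝ) × ℝ => uvar X p.1 p.2) =
      fun p => fderiv ℝ (fun p : ℝ × (Fin n → ℝ) × ℝ => X p.1 p.2.1 p.2.2)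
        (0, p.1, p.2) ((1 : ℝ), (0 : Fin n → ℝ), (0 : ℝ)) := by
    funext p; exact uvar_eq hsmooth p.1 p.2
  rw [h1]
  exact Continuous.clm_apply
    ((hsmooth.continuous_fderiv one_ne_zero).comp (by fun_prop)) continuous_const

lemma cont_W (y : Fin n → ℝ) :
    Continuous (fun p : ℝ × ℝ => deriv (fun e => X e y p.2) p.1) := by
  have h1 : (fun p : ℝ × ℝ => deriv (fun e => X e y p.2) p.1) =
      fun p => fderiv ℝ (fun p : ℝ × (Fin n → ℝ) × ℝ => X p.1 p.2.1 p.2.2)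
        (p.1, y, p.2) ((1 : ℝ), (0 : Fin n → ℝ), (0 : ℝ)) := by
    funext p; exact (pd_eps hsmooth p.1 y p.2).deriv
  rw [h1]
  exact Continuous.clm_apply
    ((hsmooth.continuous_fderiv one_ne_zero).comp (by fun_prop)) continuous_const

lemma cont_Dfl : Continuous (fun p : (Fin n → ℝ) × ℝ => flowD X p.1 p.2) := by
  have h1 : (fun p : (Fin n → ℝ) × ℝ => flowD X p.1 p.2) =
      fun p => (fderiv ℝ (fun p : ℝ × (Fin n → ℝ) × ℝ => X p.1 p.2.1 p.2.2)
        (0, p.1, p.2)).comp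
        ((0 : (Fin n → ℝ) →L[ℝ] ℝ).prod
          ((ContinuousLinearMap.id ℝ (Fin n → ℝ)).prod (0 : (Fin n → ℝ) →L[ℝ] ℝ))) := by
    funext p; exact flowD_eq hsmooth p.1 p.2
  rw [h1]
  exact Continuous.clm_comp
    ((hsmooth.continuous_fderiv one_ne_zero).comp (by fun_prop)) continuous_const

end plumbing

section uode

variable {B ΔB : (Fin n → ℝ) → (Fin n → ℝ)} {X : ℝ → (Fin n → ℝ) → ℝ → (Fin n → ℝ)}

lemma uvar_zero (hinit : ∀ ε x, X ε x 0 = x) (y : Fin n → ℝ) : uvar X y 0 = 0 := by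
  have : (fun ε => X ε y 0) = fun _ => y := by funext ε; exact hinit ε y
  simp [uvar, this]

lemma uvar_ode (hB : ContDiff ℝ 1 B) (hΔB : ContDiff ℝ 1 ΔB)
    (hflow : ∀ ε x t, HasDerivAt (X ε x) (B (X ε x t) + ε • ΔB (X ε x t)) t)
    (hinit : ∀ ε x, X ε x 0 = x)
    (hsmooth : ContDiff ℝ 1 (fun p : ℝ × (Fin n → ℝ) × ℝ => X p.1 p.2.1 p.2.2))
    (y : Fin n → ℝ) :
    ∀ τ, HasDerivAt (uvar X y)
      (fderiv ℝ B (X 0 y τ) (uvar X y τ) + ΔB (X 0 y τ)) τ := by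
  -- the time-dependent integrand after differentiating under the integral
  set G : ℝ → Fin n → ℝ := fun σ => fderiv ℝ B (X 0 y σ) (uvar X y σ) + ΔB (X 0 y σ) with hG
  -- continuity of various maps
  have hXc : ∀ e : ℝ, Continuous (fun σ => X e y σ) :=
    fun e => hsmooth.continuous.comp (by fun_prop :
      Continuous fun σ : ℝ => ((e, y, σ) : ℝ × (Fin n → ℝ) × ℝ))
  have hucont : Continuous (fun σ => uvar X y σ) :=
    (cont_u hsmooth).comp (by fun_prop : Continuous fun σ : ℝ => ((y, σ) : (Fin n → ℝ) × ℝ))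
  have hGc : Continuous G := by
    apply Continuous.add
    · exact Continuous.clm_apply
        ((hB.continuous_fderiv one_ne_zero).comp (hXc 0)) hucont
    · exact hΔB.continuous.comp (hXc 0)
  -- the key integral representation
  have key : ∀ τ, uvar X y τ = ∫ σ in (0:ℝ)..τ, G σ := by
    intro τ
    set W : ℝ → ℝ → Fin n → ℝ := fun e σ => deriv (fun x : ℝ => X x y σ) e with hW
    have hWd : ∀ e σ, HasDerivAt (fun x : ℝ => X x y σ) (W e σ) e :=
      fun e σ => pd_eps' hsmooth e y σ
    set F : ℝ → ℝ → Fin n → ℝ := fun e σ => B (X e y σ) + e • ΔB (X e y σ) with hF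
    set F' : ℝ → ℝ → Fin n → ℝ := fun e σ =>
      (fderiv ℝ B (X e y σ) (W e σ) + e • fderiv ℝ ΔB (X e y σ) (W e σ)) + ΔB (X e y σ)
      with hF'
    have hWc : Continuous (fun p : ℝ × ℝ => W p.1 p.2) := cont_W hsmooth y
    have hXc2 : Continuous (fun p : ℝ × ℝ => X p.1 y p.2) :=
      hsmooth.continuous.comp (by fun_prop :
        Continuous fun p : ℝ × ℝ => ((p.1, y, p.2) : ℝ × (Fin n → ℝ) × ℝ))
    have hF'c : Continuous (fun p : ℝ × ℝ => F' p.1 p.2) := by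
      apply Continuous.add
      · apply Continuous.add
        · exact Continuous.clm_apply
            ((hB.continuous_fderiv one_ne_zero).comp hXc2) hWc
        · exact Continuous.smul continuous_fst
            (Continuous.clm_apply ((hΔB.continuous_fderiv one_ne_zero).comp hXc2) hWc)
      · exact hΔB.continuous.comp hXc2
    obtain ⟨C, hC⟩ := (((isCompact_closedBall (0:ℝ) 1).prod
      (isCompact_uIcc (a := 0) (b := τ)))).exists_bound_of_continuousOn
      (hF'c.continuousOn (s := closedBall 0 1 ×ˢ uIcc 0 τ))
    have hmeasF : ∀ᶠ e in nhds (0:ℝ),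
        AEStronglyMeasurable (F e) (volume.restrict (uIoc (0:ℝ) τ)) :=
      Filter.Eventually.of_forall (fun e =>
        ((hB.continuous.comp (hXc e)).add
          ((continuous_const (y := e)).smul (hΔB.continuous.comp (hXc e)))).aestronglyMeasurable)
    have hintF : IntervalIntegrable (F 0) volume 0 τ :=
      ((hB.continuous.comp (hXc 0)).add
        ((continuous_const (y := (0:ℝ))).smul (hΔB.continuous.comp (hXc 0)))).intervalIntegrable 0 τ
    have hmeasF' : AEStronglyMeasurable (F' 0) (volume.restrict (uIoc (0:ℝ) τ)) :=
      (hF'c.comp (by fun_prop : Continuous fun σ : ℝ => ((0:ℝ), σ))).aestronglyMeasurable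
    have hbound : ∀ᵐ σ ∂volume, σ ∈ uIoc (0:ℝ) τ → ∀ e ∈ ball (0:ℝ) 1, ‖F' e σ‖ ≤ C :=
      Filter.Eventually.of_forall (fun σ hσ e he => hC (e, σ)
        ⟨ball_subset_closedBall he, uIoc_subset_uIcc hσ⟩)
    have hdiff : ∀ᵐ σ ∂volume, σ ∈ uIoc (0:ℝ) τ → ∀ e ∈ ball (0:ℝ) 1,
        HasDerivAt (fun x => F x σ) (F' e σ) e := by
      apply Filter.Eventually.of_forall
      intro σ _ e _
      have h1 : HasDerivAt (fun x : ℝ => B (X x y σ))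
          (fderiv ℝ B (X e y σ) (W e σ)) e :=
        (hB.differentiable one_ne_zero _).hasFDerivAt.comp_hasDerivAt e (hWd e σ)
      have hinner : HasDerivAt (fun x : ℝ => ΔB (X x y σ))
          (fderiv ℝ ΔB (X e y σ) (W e σ)) e :=
        (hΔB.differentiable one_ne_zero _).hasFDerivAt.comp_hasDerivAt e (hWd e σ)
      have h2 := (hasDerivAt_id e).smul hinner
      have h3 := h1.add h2
      refine h3.congr_deriv ?_
      symm
      simp only [hF', _root_.id, one_smul]
      abel
    have hdom := intervalIntegral.hasDerivAt_integral_of_dominated_loc_of_deriv_le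
      (F := F) (F' := F') (x₀ := (0:ℝ)) (a := 0) (b := τ) (bound := fun _ => C)
      (μ := volume) (ball_mem_nhds _ one_pos) hmeasF hintF hmeasF' hbound intervalIntegrable_const hdiff
    have hsub : ∀ e : ℝ, (∫ σ in (0:ℝ)..τ, F e σ) = X e y τ - y := by
      intro e
      have := intervalIntegral.integral_eq_sub_of_hasDerivAt
        (f := fun σ => X e y σ) (f' := fun σ => F e σ)
        (fun σ _ => hflow e y σ)
        (((hB.continuous.comp (hXc e)).add
          ((continuous_const (y := e)).smul (hΔB.continuous.comp (hXc e)))).intervalIntegrable 0 τ)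
      rw [this]
      simp only [hinit e y]
    have hd := hdom.2
    have hd2 : HasDerivAt (fun e => X e y τ) (∫ σ in (0:ℝ)..τ, F' 0 σ) 0 := by
      have heq : (fun e => ∫ σ in (0:ℝ)..τ, F e σ) = fun e => X e y τ - y := by
        funext e; exact hsub e
      rw [heq] at hd
      have := hd.add_const y
      simpa using this
    have : uvar X y τ = ∫ σ in (0:ℝ)..τ, F' 0 σ := hd2.deriv
    rw [this]
    congr 1
    funext σ
    simp only [hF', hG, zero_smul, add_zero, zero_add]
    rfl
  have hfun : ∀ u, (fun u => ∫ σ in (0:ℝ)..u, G σ) u = uvar X y u := fun u => (key u).symm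
  intro τ
  have h := (hGc.integral_hasStrictDerivAt 0 τ).hasDerivAt
  exact h.congr_of_eventuallyEq (Filter.Eventually.of_forall (fun u => key u))

end uode

section dflode

variable {B ΔB : (Fin n → ℝ) → (Fin n → ℝ)} {X : ℝ → (Fin n → ℝ) → ℝ → (Fin n → ℝ)}

lemma flowD_zero (hinit : ∀ ε x, X ε x 0 = x) (y : Fin n → ℝ) :
    flowD X y 0 = ContinuousLinearMap.id ℝ (Fin n → ℝ) := by
  have : (fun z : Fin n → ℝ => X 0 z 0) = fun z => z := by funext z; exact hinit 0 z
  rw [flowD, this]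
  exact fderiv_id

lemma flowD_ode (hB : ContDiff ℝ 1 B)
    (hinit : ∀ ε x, X ε x 0 = x)
    (hflow : ∀ ε x t, HasDerivAt (X ε x) (B (X ε x t) + ε • ΔB (X ε x t)) t)
    (hsmooth : ContDiff ℝ 1 (fun p : ℝ × (Fin n → ℝ) × ℝ => X p.1 p.2.1 p.2.2))
    (y : Fin n → ℝ) :
    ∀ τ, HasDerivAt (flowD X y) ((fderiv ℝ B (X 0 y τ)).comp (flowD X y τ)) τ := by
  set G : ℝ → (Fin n → ℝ) →L[ℝ] (Fin n → ℝ) :=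
    fun σ => (fderiv ℝ B (X 0 y σ)).comp (flowD X y σ) with hG
  have hXc : ∀ z : Fin n → ℝ, Continuous (fun σ => X 0 z σ) :=
    fun z => hsmooth.continuous.comp (by fun_prop :
      Continuous fun σ : ℝ => (((0:ℝ), z, σ) : ℝ × (Fin n → ℝ) × ℝ))
  have hGc : Continuous G :=
    Continuous.clm_comp ((hB.continuous_fderiv one_ne_zero).comp (hXc y))
      ((cont_Dfl hsmooth).comp (by fun_prop : Continuous fun σ : ℝ => (y, σ)))
  have key : ∀ τ, flowD X y τ =
      (∫ σ in (0:ℝ)..τ, G σ) + ContinuousLinearMap.id ℝ (Fin n → ℝ) := by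
    intro τ
    set F : (Fin n → ℝ) → ℝ → (Fin n → ℝ) := fun z σ => B (X 0 z σ) with hF
    set F' : (Fin n → ℝ) → ℝ → (Fin n → ℝ) →L[ℝ] (Fin n → ℝ) :=
      fun z σ => (fderiv ℝ B (X 0 z σ)).comp (flowD X z σ) with hF'
    have hF'c : Continuous (fun p : (Fin n → ℝ) × ℝ => F' p.1 p.2) :=
      Continuous.clm_comp ((hB.continuous_fderiv one_ne_zero).comp (cont_X hsmooth))
        (cont_Dfl hsmooth)
    obtain ⟨C, hC⟩ := (((isCompact_closedBall y 1).prod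
      (isCompact_uIcc (a := 0) (b := τ)))).exists_bound_of_continuousOn
      (hF'c.continuousOn (s := closedBall y 1 ×ˢ uIcc 0 τ))
    have hmeasF : ∀ᶠ z in nhds y,
        AEStronglyMeasurable (F z) (volume.restrict (uIoc (0:ℝ) τ)) :=
      Filter.Eventually.of_forall (fun z =>
        (hB.continuous.comp (hXc z)).aestronglyMeasurable)
    have hintF : IntervalIntegrable (F y) volume 0 τ :=
      (hB.continuous.comp (hXc y)).intervalIntegrable 0 τ
    have hmeasF' : AEStronglyMeasurable (F' y) (volume.restrict (uIoc (0:ℝ) τ)) :=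
      (hF'c.comp (by fun_prop : Continuous fun σ : ℝ => (y, σ))).aestronglyMeasurable
    have hbound : ∀ᵐ σ ∂volume, σ ∈ uIoc (0:ℝ) τ → ∀ z ∈ ball y 1, ‖F' z σ‖ ≤ C :=
      Filter.Eventually.of_forall (fun σ hσ z hz => hC (z, σ)
        ⟨ball_subset_closedBall hz, uIoc_subset_uIcc hσ⟩)
    have hdiff : ∀ᵐ σ ∂volume, σ ∈ uIoc (0:ℝ) τ → ∀ z ∈ ball y 1,
        HasFDerivAt (fun z => F z σ) (F' z σ) z :=
      Filter.Eventually.of_forall (fun σ _ z _ =>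
        (hB.differentiable one_ne_zero _).hasFDerivAt.comp z (pd_y hsmooth z σ))
    have hd := intervalIntegral.hasFDerivAt_integral_of_dominated_of_fderiv_le
      (F := F) (F' := F') (x₀ := y) (a := 0) (b := τ) (bound := fun _ => C)
      (μ := volume) (ball_mem_nhds _ one_pos) hmeasF hintF hmeasF' hbound intervalIntegrable_const hdiff
    have hsub : ∀ z : Fin n → ℝ, (∫ σ in (0:ℝ)..τ, F z σ) = X 0 z τ - z := by
      intro z
      have hder : ∀ σ ∈ uIcc (0:ℝ) τ, HasDerivAt (X 0 z) (F z σ) σ := by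
        intro σ _
        simpa using hflow 0 z σ
      have := intervalIntegral.integral_eq_sub_of_hasDerivAt hder
        ((hB.continuous.comp (hXc z)).intervalIntegrable 0 τ)
      rw [this]
      simp only [hinit 0 z]
    have hd2 : HasFDerivAt (fun z => X 0 z τ)
        ((∫ σ in (0:ℝ)..τ, F' y σ) + ContinuousLinearMap.id ℝ (Fin n → ℝ)) y := by
      have heq : (fun z => ∫ σ in (0:ℝ)..τ, F z σ) = fun z => X 0 z τ - z :=
        funext hsub
      rw [heq] at hd
      have := hd.add (hasFDerivAt_id y)
      simpa using this
    rw [show flowD X y τ = _ from hd2.fderiv]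
  intro τ
  have h := ((hGc.integral_hasStrictDerivAt 0 τ).hasDerivAt).add_const
    (ContinuousLinearMap.id ℝ (Fin n → ℝ))
  exact h.congr_of_eventuallyEq (Filter.Eventually.of_forall (fun u => key u))

end dflode

section grouplemmas

variable {B ΔB : (Fin n → ℝ) → (Fin n → ℝ)} {X : ℝ → (Fin n → ℝ) → ℝ → (Fin n → ℝ)}

lemma flowD_chain
    (hsmooth : ContDiff ℝ 1 (fun p : ℝ × (Fin n → ℝ) × ℝ => X p.1 p.2.1 p.2.2))
    (hgroup : ∀ (y : Fin n → ℝ) (s t : ℝ), X 0 (X 0 y t) s = X 0 y (t + s))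
    (y : Fin n → ℝ) (s τ : ℝ) :
    (flowD X (X 0 y s) τ).comp (flowD X y s) = flowD X y (s + τ) := by
  have h1 : (fun z => X 0 (X 0 z s) τ) = fun z => X 0 z (s + τ) := by
    funext z; exact hgroup z τ s
  have hc : HasFDerivAt (fun z => X 0 (X 0 z s) τ)
      ((flowD X (X 0 y s) τ).comp (flowD X y s)) y :=
    by have h := (pd_y hsmooth (X 0 y s) τ).comp y (pd_y hsmooth y s); exact h
  rw [h1] at hc
  exact (hc.fderiv).symm ▸ rfl

lemma flowD_isUnit
    (hinit : ∀ ε x, X ε x 0 = x)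
    (hsmooth : ContDiff ℝ 1 (fun p : ℝ × (Fin n → ℝ) × ℝ => X p.1 p.2.1 p.2.2))
    (hgroup : ∀ (y : Fin n → ℝ) (s t : ℝ), X 0 (X 0 y t) s = X 0 y (t + s))
    (y : Fin n → ℝ) (s : ℝ) : IsUnit (flowD X y s) := by
  have hleft : (flowD X (X 0 y s) (-s)).comp (flowD X y s) =
      ContinuousLinearMap.id ℝ (Fin n → ℝ) := by
    rw [flowD_chain hsmooth hgroup y s (-s)]
    rw [show s + -s = 0 by ring]
    exact flowD_zero hinit y
  have hXys : X 0 (X 0 y s) (-s) = y := by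
    rw [hgroup y (-s) s, show s + -s = 0 by ring, hinit 0 y]
  have hright : (flowD X y s).comp (flowD X (X 0 y s) (-s)) =
      ContinuousLinearMap.id ℝ (Fin n → ℝ) := by
    have := flowD_chain hsmooth hgroup (X 0 y s) (-s) s
    rw [hXys] at this
    rw [this, show -s + s = 0 by ring]
    exact flowD_zero hinit (X 0 y s)
  exact ⟨⟨flowD X y s, flowD X (X 0 y s) (-s), hright, hleft⟩, rfl⟩

lemma uvar_shift (hB : ContDiff ℝ 1 B) (hΔB : ContDiff ℝ 1 ΔB)
    (hflow : ∀ ε x t, HasDerivAt (X ε x) (B (X ε x t) + ε • ΔB (X ε x t)) t)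
    (hinit : ∀ ε x, X ε x 0 = x)
    (hsmooth : ContDiff ℝ 1 (fun p : ℝ × (Fin n → ℝ) × ℝ => X p.1 p.2.1 p.2.2))
    (hgroup : ∀ (y : Fin n → ℝ) (s t : ℝ), X 0 (X 0 y t) s = X 0 y (t + s))
    (y : Fin n → ℝ) (s τ : ℝ) :
    uvar X (X 0 y s) τ = uvar X y (s + τ) - flowD X (X 0 y s) τ (uvar X y s) := by
  set A : ℝ → (Fin n → ℝ) →L[ℝ] (Fin n → ℝ) :=
    fun σ => fderiv ℝ B (X 0 y (s + σ)) with hA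
  set c : ℝ → Fin n → ℝ := fun σ => ΔB (X 0 y (s + σ)) with hc
  have hXyc : Continuous (fun σ : ℝ => X 0 y (s + σ)) :=
    hsmooth.continuous.comp (by fun_prop :
      Continuous fun σ : ℝ => (((0:ℝ), y, s + σ) : ℝ × (Fin n → ℝ) × ℝ))
  have hAc : Continuous A := (hB.continuous_fderiv one_ne_zero).comp hXyc
  set f : ℝ → Fin n → ℝ := fun τ => uvar X (X 0 y s) τ with hf0
  set g : ℝ → Fin n → ℝ :=
    fun τ => uvar X y (s + τ) - flowD X (X 0 y s) τ (uvar X y s) with hg0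
  have hf : ∀ σ, HasDerivAt f (A σ (f σ) + c σ) σ := by
    intro σ
    have h := uvar_ode hB hΔB hflow hinit hsmooth (X 0 y s) σ
    rwa [hgroup y σ s] at h
  have hg : ∀ σ, HasDerivAt g (A σ (g σ) + c σ) σ := by
    intro σ
    have hshift : HasDerivAt (fun τ : ℝ => s + τ) 1 σ := by
      simpa using (hasDerivAt_id σ).const_add s
    have p1 : HasDerivAt (fun τ => uvar X y (s + τ))
        (A σ (uvar X y (s + σ)) + c σ) σ := by
      have := (uvar_ode hB hΔB hflow hinit hsmooth y (s + σ)).scomp σ hshift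
      simpa [Function.comp_def] using this
    have p2 : HasDerivAt (fun τ => flowD X (X 0 y s) τ (uvar X y s))
        (((fderiv ℝ B (X 0 (X 0 y s) σ)).comp (flowD X (X 0 y s) σ)) (uvar X y s)) σ := by
      have := (flowD_ode hB hinit hflow hsmooth (X 0 y s) σ).clm_apply
        (hasDerivAt_const σ (uvar X y s))
      simpa using this
    have hd := p1.sub p2
    refine hd.congr_deriv ?_
    symm
    rw [hgroup y σ s]
    simp only [hg0, hA, ContinuousLinearMap.comp_apply, map_sub]
    abel
  have h0 : f 0 = g 0 := by
    simp [hf0, hg0, uvar_zero hinit, flowD_zero hinit]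
  exact linear_ODE_unique hAc hf hg h0 τ

end grouplemmas

/-- along a `T`-periodic orbit, the full-period trajectory mismatch
`δX_T(t) = δX(X(x_fix,t), T)` satisfies
`d/dt δX_T = ∇B · δX_T - (DX_T - I) · ΔB`. -/
theorem delta_XT_evolution_along_cycle {n : ℕ}
    (B ΔB : (Fin n → ℝ) → (Fin n → ℝ))
    (X : ℝ → (Fin n → ℝ) → ℝ → (Fin n → ℝ))
    (hB : ContDiff ℝ 1 B) (hΔB : ContDiff ℝ 1 ΔB)
    (hflow : ∀ ε x t, HasDerivAt (X ε x) (B (X ε x t) + ε • ΔB (X ε x t)) t)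
    (hinit : ∀ ε x, X ε x 0 = x)
    (hsmooth : ContDiff ℝ 1 (fun p : ℝ × (Fin n → ℝ) × ℝ => X p.1 p.2.1 p.2.2))
    (hgroup : ∀ (y : Fin n → ℝ) (s t : ℝ), X 0 (X 0 y t) s = X 0 y (t + s))
    (x_fix : Fin n → ℝ) (T : ℝ) (hper : X 0 x_fix T = x_fix) :
    ∀ t : ℝ, HasDerivAt (fun s => deriv (fun ε => X ε (X 0 x_fix s) T) 0)
      (fderiv ℝ B (X 0 x_fix t) (deriv (fun ε => X ε (X 0 x_fix t) T) 0)
        - (fderiv ℝ (fun y => X 0 y T) (X 0 x_fix t) (ΔB (X 0 x_fix t))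
            - ΔB (X 0 x_fix t))) t := by
  intro t
  have hper' : ∀ s : ℝ, X 0 x_fix (s + T) = X 0 x_fix s := by
    intro s
    rw [add_comm, ← hgroup x_fix s T, hper]
  set ψ : ℝ → Fin n → ℝ := uvar X x_fix with hψ
  set M : ℝ → (Fin n → ℝ) →L[ℝ] (Fin n → ℝ) := fun s => flowD X x_fix s with hM
  set Q : ℝ → (Fin n → ℝ) →L[ℝ] (Fin n → ℝ) := fun s => Ring.inverse (M s) with hQ
  set Lp : ℝ → (Fin n → ℝ) →L[ℝ] (Fin n → ℝ) :=
    fun s => fderiv ℝ B (X 0 x_fix s) with hLp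
  have hMunit : ∀ s, IsUnit (M s) := fun s => flowD_isUnit hinit hsmooth hgroup x_fix s
  have hMQ : ∀ s, M s * Q s = 1 := fun s => Ring.mul_inverse_cancel _ (hMunit s)
  have hψder : ∀ σ, HasDerivAt ψ (Lp σ (ψ σ) + ΔB (X 0 x_fix σ)) σ :=
    uvar_ode hB hΔB hflow hinit hsmooth x_fix
  have hMder : ∀ s, HasDerivAt M (Lp s * M s) s :=
    fun s => flowD_ode hB hinit hflow hsmooth x_fix s
  have hQder : ∀ s, HasDerivAt Q (-(Q s * Lp s)) s := by
    intro s
    obtain ⟨u, huu⟩ := hMunit s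
    have hinv := hasFDerivAt_ringInverse (𝕜 := ℝ) u
    rw [huu] at hinv
    have hcomp := hinv.comp_hasDerivAt s (hMder s)
    have hQa : Q s = ↑u⁻¹ := by
      show Ring.inverse (M s) = _
      rw [← huu]
      exact Ring.inverse_unit u
    have h1 : M s * (↑u⁻¹ : (Fin n → ℝ) →L[ℝ] (Fin n → ℝ)) = 1 := by
      rw [← huu]
      exact_mod_cast u.mul_inv
    refine hcomp.congr_deriv ?_
    symm
    simp only [ContinuousLinearMap.neg_apply, ContinuousLinearMap.mulLeftRight_apply]
    rw [hQa]
    simp only [mul_assoc, h1, mul_one]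
  have hDeq : ∀ s, flowD X (X 0 x_fix s) T = M (s + T) * Q s := by
    intro s
    have hch : flowD X (X 0 x_fix s) T * M s = M (s + T) :=
      flowD_chain hsmooth hgroup x_fix s T
    rw [← hch, mul_assoc, hMQ s, mul_one]
  have hueq : ∀ s, uvar X (X 0 x_fix s) T = ψ (s + T) - (M (s + T) * Q s) (ψ s) := by
    intro s
    rw [uvar_shift hB hΔB hflow hinit hsmooth hgroup x_fix s T, hDeq s]
  have hfun : (fun s => deriv (fun ε => X ε (X 0 x_fix s) T) 0) =
      fun s => ψ (s + T) - (M (s + T) * Q s) (ψ s) := by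
    funext s; exact hueq s
  have h1 : HasDerivAt (fun s => ψ (s + T)) (Lp t (ψ (t + T)) + ΔB (X 0 x_fix t)) t := by
    have hshift : HasDerivAt (fun s : ℝ => s + T) 1 t := by
      simpa using (hasDerivAt_id t).add_const T
    have h := (hψder (t + T)).scomp t hshift
    simp only [one_smul] at h
    have hLpper : Lp (t + T) = Lp t := by rw [hLp]; simp only [hper' t]
    rw [hper' t, hLpper] at h
    exact h
  have h2 : HasDerivAt (fun s => M (s + T)) (Lp t * M (t + T)) t := by
    have hshift : HasDerivAt (fun s : ℝ => s + T) 1 t := by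
      simpa using (hasDerivAt_id t).add_const T
    have h := (hMder (t + T)).scomp t hshift
    simp only [one_smul] at h
    have hLpper : Lp (t + T) = Lp t := by rw [hLp]; simp only [hper' t]
    rw [hLpper] at h
    exact h
  have h4 := h2.mul (hQder t)
  have h5 := h4.clm_apply (hψder t)
  have h6 := h1.sub h5
  rw [hfun,
    show deriv (fun ε => X ε (X 0 x_fix t) T) 0 = ψ (t + T) - (M (t + T) * Q t) (ψ t)
      from hueq t,
    show fderiv ℝ (fun y => X 0 y T) (X 0 x_fix t) = M (t + T) * Q t from hDeq t]
  refine h6.congr_deriv ?_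
  symm
  simp only [ContinuousLinearMap.add_apply, ContinuousLinearMap.mul_apply,
    ContinuousLinearMap.neg_apply, map_sub, map_add, map_neg, hLp, Pi.mul_apply]
  abel
end
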